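/- Let G be a group acting on a set M and let H be a finite subgroup of G which is the unique maximal stationary subgroup of the action up to conjugation. If l, g ∈ G satisfy M^{lHl⁻¹} ∩ M^{gHg⁻¹} ≠ ∅, then lHl⁻¹ = gHg⁻¹, and this holds if and only if g⁻¹l ∈ N(H), i.e. l and g define the same coset in G/N(H). Hence the assignment [g] ↦ M^{gHg⁻¹} is a well-defined injection from the set of cosets {[g] ∈ G/N(H) | M^{gHg⁻¹} ≠ ∅} to the set of nonempty fixed-point sets of conjugates of H, with pairwise disjoint images. -/

import Mathlib

/-!
A point `x` fixed by `lHl⁻¹` and by `gHg⁻¹` has a stabilizer which, by maximality, lies in some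
conjugate `mHm⁻¹`; so both `lHl⁻¹` and `gHg⁻¹` lie in `mHm⁻¹`. Conjugates of the finite group `H`
all have the cardinality of `H`, so these inclusions are equalities.
-/

/-- The fixed-point set `M^K` of a subgroup `K` acting on `M`. -/
def fixedPts {G : Type*} [Group G] (M : Type*) [MulAction G M] (K : Subgroup G) : Set M :=
  {x : M | ∀ k ∈ K, k • x = x}

/-- The conjugate subgroup `gHg⁻¹`. -/
def conjSubgroup {G : Type*} [Group G] (g : G) (H : Subgroup G) : Subgroup G :=
  Subgroup.map (MulAut.conj g).toMonoidHom H

/-- `H` is the unique, up to conjugation, maximal stationary subgroup of the action of `G`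
on `M`: `H` is finite and every subgroup with nonempty fixed-point set is contained in
some conjugate of `H`. -/
def UniqueMaxStationary {G : Type*} [Group G] (M : Type*) [MulAction G M]
    (H : Subgroup G) : Prop :=
  Finite H ∧ ∀ K : Subgroup G, (fixedPts M K).Nonempty → ∃ l : G, K ≤ conjSubgroup l H

section Conjugation

variable {G : Type*} [Group G]

lemma mem_conjSubgroup {g x : G} {H : Subgroup G} :
    x ∈ conjSubgroup g H ↔ g⁻¹ * x * g ∈ H := by
  simp only [conjSubgroup, Subgroup.mem_map, MulEquiv.coe_toMonoidHom, MulAut.conj_apply]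
  constructor
  · rintro ⟨h, hh, rfl⟩
    simpa [mul_assoc] using hh
  · intro hx
    exact ⟨g⁻¹ * x * g, hx, by group⟩

lemma conjSubgroup_conjSubgroup (a b : G) (H : Subgroup G) :
    conjSubgroup a (conjSubgroup b H) = conjSubgroup (a * b) H := by
  ext x
  simp only [mem_conjSubgroup, mul_inv_rev, mul_assoc]

lemma conjSubgroup_one (H : Subgroup G) : conjSubgroup 1 H = H := by
  ext x
  simp only [mem_conjSubgroup, inv_one, one_mul, mul_one]

lemma conjSubgroup_eq_self_iff {a : G} {H : Subgroup G} :
    conjSubgroup a H = H ↔ a ∈ Subgroup.normalizer (H : Set G) := by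
  rw [Subgroup.mem_normalizer_iff]
  constructor
  · intro h n
    conv_rhs => rw [← h, mem_conjSubgroup, show a⁻¹ * (a * n * a⁻¹) * a = n by group]
  · intro h
    ext x
    rw [mem_conjSubgroup, h, mul_assoc, mul_inv_cancel_right, mul_inv_cancel_left]

lemma conjSubgroup_eq_conjSubgroup_iff {l g : G} {H : Subgroup G} :
    conjSubgroup l H = conjSubgroup g H ↔ g⁻¹ * l ∈ Subgroup.normalizer (H : Set G) := by
  rw [← conjSubgroup_eq_self_iff]
  constructor
  · intro h
    rw [← conjSubgroup_conjSubgroup, h, conjSubgroup_conjSubgroup, inv_mul_cancel,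
      conjSubgroup_one]
  · intro h
    rw [← mul_inv_cancel_left g l, ← conjSubgroup_conjSubgroup, h]

noncomputable def conjSubgroupEquiv (g : G) (H : Subgroup G) : H ≃* conjSubgroup g H :=
  H.equivMapOfInjective _ (MulAut.conj g).injective

instance (g : G) (H : Subgroup G) [Finite H] : Finite (conjSubgroup g H) :=
  Finite.of_equiv H (conjSubgroupEquiv g H).toEquiv

lemma card_conjSubgroup (g : G) (H : Subgroup G) :
    Nat.card (conjSubgroup g H) = Nat.card H :=
  (Nat.card_congr (conjSubgroupEquiv g H).toEquiv).symm

lemma conjSubgroup_eq_of_le {a b : G} {H : Subgroup G} [Finite H]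
    (h : conjSubgroup a H ≤ conjSubgroup b H) : conjSubgroup a H = conjSubgroup b H :=
  Subgroup.eq_of_le_of_card_ge h (by rw [card_conjSubgroup, card_conjSubgroup])

end Conjugation

section FixedPoints

variable {G M : Type*} [Group G] [MulAction G M]

lemma mem_fixedPts_iff_le_stabilizer {K : Subgroup G} {x : M} :
    x ∈ fixedPts M K ↔ K ≤ MulAction.stabilizer G x :=
  Iff.rfl

lemma mem_fixedPts_stabilizer (x : M) : x ∈ fixedPts M (MulAction.stabilizer G x) :=
  mem_fixedPts_iff_le_stabilizer.2 le_rfl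

lemma UniqueMaxStationary.conjSubgroup_eq_of_mem_fixedPts {H : Subgroup G}
    (hH : UniqueMaxStationary M H) {l g : G} {x : M} (hl : x ∈ fixedPts M (conjSubgroup l H))
    (hg : x ∈ fixedPts M (conjSubgroup g H)) : conjSubgroup l H = conjSubgroup g H := by
  obtain ⟨hfin, hmax⟩ := hH
  obtain ⟨m, hm⟩ := hmax _ ⟨x, mem_fixedPts_stabilizer x⟩
  rw [conjSubgroup_eq_of_le ((mem_fixedPts_iff_le_stabilizer.1 hl).trans hm),
    conjSubgroup_eq_of_le ((mem_fixedPts_iff_le_stabilizer.1 hg).trans hm)]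

end FixedPoints

/-- If `H` is the unique maximal stationary subgroup up to conjugation, then
`M^{lHl⁻¹} ∩ M^{gHg⁻¹} ≠ ∅` forces `lHl⁻¹ = gHg⁻¹`; moreover `lHl⁻¹ = gHg⁻¹` iff
`g⁻¹l ∈ N(H)` (i.e. `l` and `g` define the same coset in `G/N(H)`). Hence
`[g] ↦ M^{gHg⁻¹}` is a well-defined injection on cosets with nonempty fixed-point set,
with pairwise disjoint images. -/
theorem fixedPts_conj_disjoint_and_injective {G M : Type*} [Group G] [MulAction G M]
    (H : Subgroup G) (hH : UniqueMaxStationary M H) :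
    (∀ l g : G, (fixedPts M (conjSubgroup l H) ∩ fixedPts M (conjSubgroup g H)).Nonempty →
      conjSubgroup l H = conjSubgroup g H) ∧
    (∀ l g : G, conjSubgroup l H = conjSubgroup g H ↔ g⁻¹ * l ∈ Subgroup.normalizer (H : Set G)) ∧
    (∀ l g : G, (fixedPts M (conjSubgroup l H)).Nonempty →
      (fixedPts M (conjSubgroup l H) = fixedPts M (conjSubgroup g H) ↔
        g⁻¹ * l ∈ Subgroup.normalizer (H : Set G))) := by
  refine ⟨fun l g ⟨x, hxl, hxg⟩ => hH.conjSubgroup_eq_of_mem_fixedPts hxl hxg,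
    fun l g => conjSubgroup_eq_conjSubgroup_iff, fun l g ⟨x, hx⟩ => ?_⟩
  rw [← conjSubgroup_eq_conjSubgroup_iff]
  exact ⟨fun h => hH.conjSubgroup_eq_of_mem_fixedPts hx (h ▸ hx), congrArg (fixedPts M)⟩
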